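/- arXiv:1203.2473 — 2 statements merged into one kernel-verified Lean document; each statement's English description precedes it below -/
import Mathlib

section
/- For positive integers n and k ≥ 1 and i, j ∈ Z/nZ, the number of walks of length k from i to j in X_n equals (n/rad(n))^{k-1} times the number of walks of length k from i mod rad(n) to j mod rad(n) in X_{rad(n)}. -/
noncomputable def walkCount {V : Type*} (G : SimpleGraph V) (k : ℕ) (u v : V) : ℕ :=
  Nat.card {p : G.Walk u v // p.length = k}

def unitaryCayley (n : ℕ) : SimpleGraph (ZMod n) where
  Adj a b := a ≠ b ∧ IsUnit (a - b)
  symm := ⟨by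
    rintro a b ⟨hne, hu⟩
    exact ⟨hne.symm, by rw [show b - a = -(a - b) by ring]; exact hu.neg⟩⟩
  loopless := ⟨fun a h => h.1 rfl⟩

def rad (n : ℕ) : ℕ := n.primeFactors.prod id

/-!
Reduction modulo `rad n` is a surjective ring map `ZMod n → ZMod (rad n)` that reflects units,
because an integer is coprime to `n` iff it is coprime to `rad n`. Hence `X_n` is the pullback of
`X_{rad n}` along this map, and all its fibres have `n / rad n` elements. For the pullback of a
graph along a map with fibres of constant size `c`, every intermediate vertex of a walk of
length `k` can be lifted in `c` ways, which multiplies the walk count by `c ^ (k - 1)`.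
-/

open Finset

theorem AddMonoidHom.card_fiber_of_surjective {G H F : Type*} [AddGroup G] [Fintype G]
    [AddMonoid H] [Fintype H] [DecidableEq H] [FunLike F G H] [AddMonoidHomClass F G H]
    (f : F) (hf : Function.Surjective f) (y : H) :
    #{x | f x = y} = Fintype.card G / Fintype.card H := by
  have hconst : ∀ z, #{x | f x = z} = #{x | f x = y} := fun z =>
    AddMonoidHom.card_fiber_eq_of_mem_range f (hf z) (hf y)
  have hcard : Fintype.card G = #{x | f x = y} * Fintype.card H := by
    rw [← card_univ, card_eq_sum_card_fiberwise (f := f) (t := univ) (fun _ _ => mem_univ _),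
      sum_congr rfl fun z _ => hconst z, sum_const, card_univ, smul_eq_mul, mul_comm]
  exact (Nat.div_eq_of_eq_mul_left Fintype.card_pos hcard).symm

section Fibres

variable {V W : Type*} [Fintype V] [Fintype W] [DecidableEq W]

theorem Finset.sum_comp_of_card_fiber {M : Type*} [AddCommMonoid M] {π : V → W} {c : ℕ}
    (hc : ∀ w, #{v | π v = w} = c) (f : W → M) :
    ∑ v, f (π v) = c • ∑ w, f w := by
  rw [← sum_fiberwise' univ π f, smul_sum]
  exact sum_congr rfl fun w _ => by rw [sum_const, hc]

variable {R : Type*} [Semiring R] {π : V → W} {c : ℕ}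

theorem Matrix.submatrix_mul_submatrix_of_card_fiber {l l' m m' : Type*}
    (hc : ∀ w, #{v | π v = w} = c) (A : Matrix l W R) (B : Matrix W m R) (e : l' → l)
    (f : m' → m) :
    A.submatrix e π * B.submatrix π f = c • (A * B).submatrix e f := by
  ext i j
  simp only [Matrix.mul_apply, Matrix.submatrix_apply, Matrix.smul_apply]
  exact sum_comp_of_card_fiber hc fun w => A (e i) w * B w (f j)

theorem Matrix.submatrix_pow_succ_of_card_fiber [DecidableEq V]
    (hc : ∀ w, #{v | π v = w} = c) (M : Matrix W W R) (k : ℕ) :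
    M.submatrix π π ^ (k + 1) = c ^ k • (M ^ (k + 1)).submatrix π π := by
  induction k with
  | zero => simp
  | succ k ih =>
    rw [pow_succ, ih, Matrix.smul_mul, Matrix.submatrix_mul_submatrix_of_card_fiber hc,
      smul_smul, ← pow_succ, ← pow_succ]

end Fibres

theorem SimpleGraph.adjMatrix_comap {V W R : Type*} [Zero R] [One R] (H : SimpleGraph W)
    [DecidableRel H.Adj] (π : V → W) :
    (H.comap π).adjMatrix R = (H.adjMatrix R).submatrix π π := by
  ext u v
  simp [SimpleGraph.adjMatrix_apply]

theorem walkCount_eq_adjMatrix_pow {V : Type*} [Fintype V] [DecidableEq V] (G : SimpleGraph V)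
    [DecidableRel G.Adj] (k : ℕ) (u v : V) :
    walkCount G k u v = (G.adjMatrix ℕ ^ k) u v := by
  rw [SimpleGraph.adjMatrix_pow_apply_eq_card_walk, Nat.cast_id, walkCount,
    Nat.card_eq_fintype_card]
  exact Fintype.card_congr (Equiv.subtypeEquivRight fun _ => Iff.rfl)

theorem walkCount_comap_of_card_fiber {V W : Type*} [Fintype V] [Fintype W] [DecidableEq W]
    (H : SimpleGraph W) {π : V → W} {c : ℕ} (hc : ∀ w, #{v | π v = w} = c) (k : ℕ) (u v : V) :
    walkCount (H.comap π) (k + 1) u v = c ^ k * walkCount H (k + 1) (π u) (π v) := by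
  classical
  rw [walkCount_eq_adjMatrix_pow, walkCount_eq_adjMatrix_pow, SimpleGraph.adjMatrix_comap,
    Matrix.submatrix_pow_succ_of_card_fiber hc, Matrix.smul_apply, Matrix.submatrix_apply,
    smul_eq_mul]

theorem unitaryCayley_eq_comap {m n : ℕ} (f : ZMod n →+* ZMod m)
    (hf : ∀ x, IsUnit (f x) → IsUnit x) :
    unitaryCayley n = (unitaryCayley m).comap f := by
  ext a b
  simp only [SimpleGraph.comap_adj, unitaryCayley, ← map_sub]
  refine ⟨fun ⟨hne, hu⟩ => ⟨fun heq => hne ?_, hu.map f⟩,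
    fun ⟨hne, hu⟩ => ⟨fun heq => hne (congrArg f heq), hf _ hu⟩⟩
  -- if `f a = f b`, then `0 = f 0` is a unit of `ZMod m`, so `ZMod n` is trivial
  have h0 : IsUnit (0 : ZMod n) := hf 0 (by simpa [map_sub, heq] using hu.map f)
  have := subsingleton_of_zero_eq_one (isUnit_zero_iff.mp h0)
  exact Subsingleton.elim a b

theorem rad_eq_radical (n : ℕ) : rad n = UniqueFactorizationMonoid.radical n :=
  Nat.radical_eq_prod_primeFactors.symm

instance (n : ℕ) : NeZero (rad n) :=
  ⟨rad_eq_radical n ▸ UniqueFactorizationMonoid.radical_ne_zero⟩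

theorem rad_dvd_self (n : ℕ) : rad n ∣ n :=
  rad_eq_radical n ▸ UniqueFactorizationMonoid.radical_dvd_self

theorem Nat.coprime_rad_iff {m n : ℕ} (hn : n ≠ 0) : m.Coprime (rad n) ↔ m.Coprime n :=
  ⟨fun h => (h.pow_right n).coprime_dvd_right (rad_eq_radical n ▸ Nat.dvd_radical_pow_self hn),
    fun h => h.coprime_dvd_right (rad_dvd_self n)⟩

theorem ZMod.isUnit_of_isUnit_castHom_rad {n : ℕ} [NeZero n] (x : ZMod n)
    (hx : IsUnit (ZMod.castHom (rad_dvd_self n) (ZMod (rad n)) x)) : IsUnit x := by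
  rw [← ZMod.natCast_zmod_val x, map_natCast, ZMod.isUnit_iff_coprime,
    Nat.coprime_rad_iff (NeZero.ne n)] at hx
  rwa [← ZMod.natCast_zmod_val x, ZMod.isUnit_iff_coprime]

theorem unitaryCayley_walks_via_rad (n k : ℕ) (hn : 0 < n) (hk : 1 ≤ k)
    (i j : ZMod n) :
    walkCount (unitaryCayley n) k i j =
      (n / rad n) ^ (k - 1) *
        walkCount (unitaryCayley (rad n)) k (i.val : ZMod (rad n)) (j.val : ZMod (rad n)) := by
  have : NeZero n := ⟨hn.ne'⟩
  obtain ⟨k, rfl⟩ := Nat.exists_eq_add_of_le' hk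
  set π := ZMod.castHom (rad_dvd_self n) (ZMod (rad n))
  have hval : ∀ x : ZMod n, ((x.val : ℕ) : ZMod (rad n)) = π x := fun x => by
    rw [ZMod.castHom_apply, ZMod.natCast_val]
  have hfiber : ∀ y, #{x | π x = y} = n / rad n := fun y => by
    simpa only [ZMod.card] using
      AddMonoidHom.card_fiber_of_surjective π (ZMod.ringHom_surjective π) y
  rw [unitaryCayley_eq_comap π ZMod.isUnit_of_isUnit_castHom_rad,
    walkCount_comap_of_card_fiber _ hfiber, hval, hval, Nat.add_sub_cancel]
end

section
/- For any positive integer n and vertex v of X_n, the number of closed walks of length 2 at v equals φ(n), and more generally the number of walks of length 2 from 0 to r in X_n is (n/rad(n)) · ∏_{p|n, p|r}(p-1) · ∏_{p|n, p∤r}(p-2). -/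
/-!
A walk of length two from `u` to `v` in `X_n` is a common neighbour `w`, i.e. both `w - u` and
`w - v` are units; translating by `u`, their number is the number of units `x` with `x - r` a
unit, where `r = v - u`. By the Chinese remainder theorem this count is multiplicative in `n`.
Modulo `p ^ (k + 1)` a residue is a unit iff its reduction modulo `p` is nonzero, and reduction
has fibres of size `p ^ k`, so the count is `p ^ k` times the number of residues modulo `p`
avoiding both `0` and `r`, namely `p - 1` or `p - 2`. For `r = 0` the product is Euler's
formula for `φ n`.
-/

open Finset Function

theorem Nat.card_subtype_comp_of_card_fiber_eq {α β : Type*} [Finite α] [Fintype β]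
    (f : α → β) (P : β → Prop) {c : ℕ} (hc : ∀ y, Nat.card {x // f x = y} = c) :
    Nat.card {x // P (f x)} = c * Nat.card {y // P y} := by
  classical
  rw [← Nat.card_congr (Equiv.sigmaSubtypeFiberEquivSubtype f (p := fun x => P (f x)) (q := P)
    fun _ => Iff.rfl), Nat.card_sigma]
  simp [hc, mul_comm]

theorem AddMonoidHom.card_subtype_comp_of_surjective {F G H : Type*} [AddGroup G] [AddGroup H]
    [Finite G] [Fintype H] [FunLike F G H] [AddMonoidHomClass F G H] (f : F) (hf : Surjective f)
    (P : H → Prop) : Nat.card {x // P (f x)} = Nat.card (f : G →+ H).ker * Nat.card {y // P y} :=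
  Nat.card_subtype_comp_of_card_fiber_eq f P fun y =>
    Nat.card_congr (AddMonoidHom.fiberEquivKerOfSurjective (f := (f : G →+ H)) hf y)

theorem card_subtype_ne_and_ne {α : Type*} [Fintype α] [DecidableEq α] (a b : α) :
    Nat.card {y // y ≠ a ∧ y ≠ b} = Fintype.card α - #{a, b} := by
  rw [Nat.card_eq_fintype_card, Fintype.card_subtype, ← card_compl]
  congr 1
  ext
  simp

namespace ZMod

variable {p : ℕ} [Fact p.Prime] (k : ℕ)

theorem isUnit_iff_castHom_ne_zero (x : ZMod (p ^ (k + 1))) :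
    IsUnit x ↔ castHom (dvd_pow_self p k.succ_ne_zero) (ZMod p) x ≠ 0 := by
  rw [← natCast_zmod_val x, isUnit_iff_coprime, map_natCast, Ne, natCast_eq_zero_iff,
    Nat.coprime_pow_right_iff k.succ_pos, Nat.coprime_comm,
    (Fact.out : p.Prime).coprime_iff_not_dvd]

theorem card_ker_castHom_prime_pow :
    Nat.card (castHom (dvd_pow_self p k.succ_ne_zero) (ZMod p) : ZMod (p ^ (k + 1)) →+ ZMod p).ker
      = p ^ k := by
  have hcard := AddMonoidHom.card_subtype_comp_of_surjective
    (castHom (dvd_pow_self p k.succ_ne_zero) (ZMod p))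
    (castHom_surjective (dvd_pow_self p k.succ_ne_zero)) (fun _ => True)
  rw [Nat.card_congr (Equiv.subtypeUnivEquiv fun _ => trivial),
    Nat.card_congr (Equiv.subtypeUnivEquiv fun _ => trivial), Nat.card_zmod, Nat.card_zmod]
    at hcard
  exact Nat.eq_of_mul_eq_mul_right (Fact.out : p.Prime).pos (hcard.symm.trans (pow_succ p k))

end ZMod

/-- `r` is a natural number rather than a residue so that the count makes sense for all moduli
at once, as multiplicativity in `n` requires. -/
noncomputable def unitPairCount (n r : ℕ) : ℕ :=
  Nat.card {x : ZMod n // IsUnit x ∧ IsUnit (x - r)}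

theorem unitPairCount_one (r : ℕ) : unitPairCount 1 r = 1 :=
  Nat.card_eq_one_iff_unique.mpr
    ⟨inferInstance, ⟨⟨0, isUnit_of_subsingleton _, isUnit_of_subsingleton _⟩⟩⟩

theorem unitPairCount_mul (r : ℕ) {m n : ℕ} (h : m.Coprime n) :
    unitPairCount (m * n) r = unitPairCount m r * unitPairCount n r := by
  let e := ZMod.chineseRemainder h
  have he : ∀ x : ZMod (m * n), (IsUnit x ∧ IsUnit (x - r)) ↔
      (IsUnit (e x).1 ∧ IsUnit ((e x).1 - r)) ∧ (IsUnit (e x).2 ∧ IsUnit ((e x).2 - r)) := by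
    intro x
    rw [← isUnit_map_iff e x, ← isUnit_map_iff e (x - r), map_sub, map_natCast, Prod.isUnit_iff,
      Prod.isUnit_iff]
    simp only [Prod.fst_sub, Prod.snd_sub, Prod.fst_natCast, Prod.snd_natCast]
    tauto
  rw [unitPairCount, Nat.card_congr ((Equiv.subtypeEquiv e.toEquiv he).trans
    (Equiv.subtypeProdEquivProd (p := fun a : ZMod m => IsUnit a ∧ IsUnit (a - r))
      (q := fun b : ZMod n => IsUnit b ∧ IsUnit (b - r)))), Nat.card_prod]
  rfl

theorem unitPairCount_prime_pow {p : ℕ} (hp : p.Prime) (k r : ℕ) :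
    unitPairCount (p ^ (k + 1)) r = p ^ k * if p ∣ r then p - 1 else p - 2 := by
  have := Fact.mk hp
  let π := ZMod.castHom (dvd_pow_self p k.succ_ne_zero) (ZMod p)
  have hπ : ∀ x : ZMod (p ^ (k + 1)), (IsUnit x ∧ IsUnit (x - r)) ↔ (π x ≠ 0 ∧ π x ≠ r) := by
    intro x
    rw [ZMod.isUnit_iff_castHom_ne_zero, ZMod.isUnit_iff_castHom_ne_zero, map_sub, map_natCast,
      sub_ne_zero]
  rw [unitPairCount, Nat.card_congr (Equiv.subtypeEquivRight hπ),
    AddMonoidHom.card_subtype_comp_of_surjective π (ZMod.castHom_surjective _)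
      (fun y => y ≠ 0 ∧ y ≠ r), ZMod.card_ker_castHom_prime_pow, card_subtype_ne_and_ne,
    ZMod.card]
  congr 1
  split_ifs with hr
  · rw [(ZMod.natCast_eq_zero_iff r p).mpr hr, insert_eq_self.mpr (mem_singleton_self _),
      card_singleton]
  · rw [card_pair (Ne.symm (mt (ZMod.natCast_eq_zero_iff r p).mp hr))]

theorem Nat.factorization_pos_of_mem_primeFactors {n p : ℕ} (hp : p ∈ n.primeFactors) :
    0 < n.factorization p :=
  Nat.pos_of_ne_zero (Finsupp.mem_support_iff.mp (n.support_factorization ▸ hp))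

theorem div_rad_eq_prod_primeFactors {n : ℕ} (hn : n ≠ 0) :
    n / rad n = ∏ p ∈ n.primeFactors, p ^ (n.factorization p - 1) := by
  have hrad : rad n * ∏ p ∈ n.primeFactors, p ^ (n.factorization p - 1) = n := by
    conv_rhs =>
      rw [← Nat.prod_factorization_pow_eq_self hn, Nat.prod_factorization_eq_prod_primeFactors]
    rw [rad, ← prod_mul_distrib]
    refine prod_congr rfl fun p hp => ?_
    rw [id, ← pow_succ', Nat.sub_add_cancel (Nat.factorization_pos_of_mem_primeFactors hp)]
  exact Nat.div_eq_of_eq_mul_right (prod_pos fun p hp => Nat.pos_of_mem_primeFactors hp)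
    hrad.symm

theorem unitPairCount_eq {n : ℕ} (hn : n ≠ 0) (r : ℕ) :
    unitPairCount n r = (n / rad n) * (∏ p ∈ n.primeFactors.filter (· ∣ r), (p - 1))
      * ∏ p ∈ n.primeFactors.filter (fun p => ¬ p ∣ r), (p - 2) := by
  rw [Nat.multiplicative_factorization (unitPairCount · r) (fun _ _ => unitPairCount_mul r)
    (unitPairCount_one r) hn, Nat.prod_factorization_eq_prod_primeFactors, mul_assoc,
    ← prod_ite, div_rad_eq_prod_primeFactors hn, ← prod_mul_distrib]
  refine prod_congr rfl fun p hp => ?_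
  rw [← unitPairCount_prime_pow (Nat.prime_of_mem_primeFactors hp),
    Nat.sub_add_cancel (Nat.factorization_pos_of_mem_primeFactors hp)]

namespace unitaryCayley

variable {n : ℕ} [Fact (1 < n)]

theorem adj_iff {a b : ZMod n} : (unitaryCayley n).Adj a b ↔ IsUnit (a - b) :=
  ⟨And.right, fun h => ⟨sub_ne_zero.mp h.ne_zero, h⟩⟩

theorem walkCount_two (u v : ZMod n) :
    walkCount (unitaryCayley n) 2 u v = unitPairCount n (v - u).val := by
  rw [walkCount, Nat.card_congr ((unitaryCayley n).walkLengthTwoEquivCommonNeighbors u v),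
    unitPairCount, ZMod.natCast_zmod_val]
  refine Nat.card_congr ((Equiv.subRight u).subtypeEquiv fun w => ?_)
  rw [Equiv.subRight_apply, SimpleGraph.mem_commonNeighbors, adj_iff, adj_iff,
    sub_sub_sub_cancel_right, ← neg_sub w u, ← neg_sub w v, IsUnit.neg_iff, IsUnit.neg_iff]

end unitaryCayley

theorem two_walks_unitaryCayley (n : ℕ) (hn : 1 < n) :
    (∀ v : ZMod n, walkCount (unitaryCayley n) 2 v v = Nat.totient n) ∧
      ∀ r : ZMod n, walkCount (unitaryCayley n) 2 0 r =
        (n / rad n) * (∏ p ∈ n.primeFactors.filter (fun p => (p : ℕ) ∣ r.val), (p - 1))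
          * ∏ p ∈ n.primeFactors.filter (fun p => ¬ (p : ℕ) ∣ r.val), (p - 2) := by
  have : Fact (1 < n) := ⟨hn⟩
  refine ⟨fun v => ?_, fun r => ?_⟩
  · rw [unitaryCayley.walkCount_two, sub_self, ZMod.val_zero, unitPairCount_eq (by omega),
      Nat.totient_eq_div_primeFactors_mul]
    simp [rad]
  · rw [unitaryCayley.walkCount_two, sub_zero, unitPairCount_eq (by omega)]
end
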